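/- arXiv:1610.04250 — 2 statements merged into one kernel-verified Lean document; each statement's English description precedes it below -/
import Mathlib

section
/- Let F = Γ ⋉_α G be a quantum semi-direct product. Then F̂ is strong torsion-free if and only if both Γ and Ĝ are strong torsion-free. -/
/-!
STATEMENT 6. Strong torsion-freeness of the dual of a quantum semi-direct product
`F = Γ ⋉_α G`. A discrete quantum group is *strong torsion-free* if its fusion ring is
torsion-free (every connected co-finite based module over it is isomorphic to the
standard based module). The context facts of Arano–De Commer are recorded as fields of
the abstract world below. -/
structure StrongTFWorld where
  /-- discrete quantum groups (including discrete groups as duals) -/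
  QG : Type 1
  /-- fusion rings -/
  FR : Type 1
  /-- the fusion ring `Fus(Ĝ)` on `Irr(G)` -/
  Fus : QG → FR
  /-- the tensor product of fusion rings -/
  tensorFR : FR → FR → FR
  /-- torsion-freeness of a fusion ring: every connected co-finite based module over it
  is isomorphic to the standard based module -/
  TorsionFreeFR : FR → Prop
  /-- `R` and `S` have non-trivial isomorphic finite fusion subrings -/
  HaveIsoNontrivialFiniteSubrings : FR → FR → Prop
  /-- `Divisible h g` : `ĥ` is a divisible discrete quantum subgroup of `ĝ` -/
  Divisible : QG → QG → Prop
  /-- strong torsion-freeness passes to divisible discrete quantum subgroups -/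
  stf_divisible : ∀ g h, Divisible h g → TorsionFreeFR (Fus g) → TorsionFreeFR (Fus h)
  /-- Arano–De Commer: if two torsion-free fusion rings have a non-torsion-free tensor
  product, then they have non-trivial isomorphic finite fusion subrings -/
  arano_deCommer : ∀ R S, TorsionFreeFR R → TorsionFreeFR S →
      ¬ TorsionFreeFR (tensorFR R S) → HaveIsoNontrivialFiniteSubrings R S
  /-- the fusion ring of a torsion-free discrete quantum group contains no non-trivial
  finite fusion subring (no non-trivial finite quantum subgroup) -/
  no_finite_subrings : ∀ g h : QG, TorsionFreeFR (Fus g) → TorsionFreeFR (Fus h) →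
      ¬ HaveIsoNontrivialFiniteSubrings (Fus g) (Fus h)

/-- `Ĝ` is strong torsion-free iff `Fus(Ĝ)` is torsion-free. -/
def StrongTFWorld.StrongTorsionFree (W : StrongTFWorld) (g : W.QG) : Prop :=
  W.TorsionFreeFR (W.Fus g)

/-- For a quantum semi-direct product `F = Γ ⋉_α G` (so that `Γ` and `Ĝ` are divisible
in `F̂` and `Fus(F̂) = Fus(Γ) ⊗ Fus(Ĝ)`), `F̂` is strong torsion-free iff both `Γ` and
`Ĝ` are strong torsion-free. -/
theorem semidirect_strong_torsion_free (W : StrongTFWorld) (Γ G F : W.QG)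
    (hdivΓ : W.Divisible Γ F) (hdivG : W.Divisible G F)
    (hFus : W.Fus F = W.tensorFR (W.Fus Γ) (W.Fus G)) :
    W.StrongTorsionFree F ↔ (W.StrongTorsionFree Γ ∧ W.StrongTorsionFree G) := by
  constructor
  · intro hF
    exact ⟨W.stf_divisible F Γ hdivΓ hF, W.stf_divisible F G hdivG hF⟩
  · rintro ⟨hΓ, hG⟩
    unfold StrongTFWorld.StrongTorsionFree at *
    rw [hFus]
    by_contra h
    exact W.no_finite_subrings Γ G hΓ hG
      (W.arano_deCommer (W.Fus Γ) (W.Fus G) hΓ hG h)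
end

section
/- Let F = Γ ⋉_α G be a quantum semi-direct product and let δ be a torsion action of F on a finite-dimensional unital C*-algebra A. Then the set Λ := {γ ∈ Γ : there exists x ∈ Irr(G) with K_{(γ,x)} ≠ 0} is a finite subgroup of Γ. -/
open Classical
set_option linter.unusedVariables false

/-- The fusion skeleton of a compact quantum group. -/
structure FusionData where
  Irr : Type
  triv : Irr
  conj : Irr → Irr
  mult : Irr → Irr → Irr → ℕ

/-- An action of a discrete group `Γ` on a compact quantum group `G` by quantum
automorphisms, seen on `Irr(G)`. -/
structure FusionAction (Γ : Type) [Group Γ] (G : FusionData) where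
  act : Γ → G.Irr → G.Irr
  act_one : ∀ x, act 1 x = x
  act_mul : ∀ g h x, act (g * h) x = act g (act h x)
  act_triv : ∀ g, act g G.triv = G.triv
  act_conj : ∀ g x, act g (G.conj x) = G.conj (act g x)
  act_mult : ∀ g x y z, G.mult (act g z) (act g x) (act g y) = G.mult z x y

variable {Γ : Type} [Group Γ]

/-- Fusion skeleton of the quantum semi-direct product `F = Γ ⋉_α G`:
`Irr(F) = Γ × Irr(G)`, `(g, x_g) ⊗ (h, x_h)` decomposes as `(gh, x_k)` over the
irreducible constituents `x_k ⊂ α_{h⁻¹}(x_g) ⊗ x_h`, with conjugate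
`(γ,x)‾ = (γ⁻¹, α_γ(x̄))`. -/
noncomputable def semidirectFusion (G : FusionData) (α : FusionAction Γ G) : FusionData where
  Irr := Γ × G.Irr
  triv := (1, G.triv)
  conj := fun p => (p.1⁻¹, α.act p.1 (G.conj p.2))
  mult := fun z x y =>
    if z.1 = x.1 * y.1 then G.mult z.2 (α.act y.1⁻¹ x.2) y.2 else 0

/-- Let `δ` be a torsion action (an ergodic action on a finite-dimensional
unital C*-algebra `A`) of the quantum semi-direct product `F = Γ ⋉_α G`, recorded
through the predicate `Knz y` = "the spectral subspace `K_y` of `δ` is non-zero".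
The spectral calculus of `δ` provides:
* `hfin` : only finitely many spectral subspaces are non-zero (`A` is finite
  dimensional);
* `htriv` : `K_ε = A^δ ≠ 0` (ergodicity);
* `hconj` : spectral conjugation maps non-zero `K_y` to non-zero `K_ȳ`;
* `hprod` : for non-zero `K_y`, `K_{y'}` there is an irreducible constituent
  `z ⊂ y ⊗ y'` with `K_z ≠ 0`.
Then `Λ := {γ ∈ Γ | ∃ x ∈ Irr(G), K_{(γ,x)} ≠ 0}` is a finite subgroup of `Γ`. -/
theorem torsion_action_support_finite_subgroup
    (G : FusionData) (α : FusionAction Γ G)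
    (Knz : Γ × G.Irr → Prop)
    (hfin : {y : Γ × G.Irr | Knz y}.Finite)
    (htriv : Knz (semidirectFusion G α).triv)
    (hconj : ∀ y, Knz y → Knz ((semidirectFusion G α).conj y))
    (hprod : ∀ y y', Knz y → Knz y' →
      ∃ z, (semidirectFusion G α).mult z y y' ≠ 0 ∧ Knz z) :
    ∃ H : Subgroup Γ,
      (H : Set Γ) = {γ : Γ | ∃ x : G.Irr, Knz (γ, x)} ∧
      {γ : Γ | ∃ x : G.Irr, Knz (γ, x)}.Finite := by
  refine ⟨{
    carrier := {γ : Γ | ∃ x : G.Irr, Knz (γ, x)}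
    one_mem' := ⟨G.triv, htriv⟩
    mul_mem' := by
      rintro a b ⟨x, hx⟩ ⟨y, hy⟩
      obtain ⟨z, hz, hzK⟩ := hprod (a, x) (b, y) hx hy
      have h1 : z.1 = a * b := by
        by_contra h
        simp [semidirectFusion, h] at hz
      exact ⟨z.2, by rw [← h1]; exact hzK⟩
    inv_mem' := by
      rintro a ⟨x, hx⟩
      exact ⟨α.act a (G.conj x), hconj (a, x) hx⟩ }, rfl, ?_⟩
  have : {γ : Γ | ∃ x : G.Irr, Knz (γ, x)} ⊆ Prod.fst '' {y : Γ × G.Irr | Knz y} := by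
    rintro γ ⟨x, hx⟩
    exact ⟨(γ, x), hx, rfl⟩
  exact (hfin.image Prod.fst).subset this
end
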